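/- Let k ≥ 2 be an integer and use the conventions x_0 = x_1 = x_{k+1} = x_{k+2} = 0. Consider the system of k−1 polynomial equations in the unknowns x_2, …, x_k: −2x_{i−1}² + 4x_i² − 2x_{i+1}² − x_i x_{i+1} + x_{i−2} x_{i−1} − x_{i−1} x_i + x_{i+1} x_{i+2} = 1 for i = 2, …, k. Then x_i = (i−1)(k−i+1)/2, i = 2, …, k, is a solution with all x_i > 0, and it is the unique solution of the system with all components positive. -/

import Mathlib

/-!
The left-hand side of the `i`-th equation is the second difference, at `i`, of
`C_j = x_j (x_{j-1} - 2 x_j + x_{j+1})`, and the boundary conventions give `C_1 = C_{k+1} = 0`.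
Hence the system says exactly that `C_j = -(j-1)(k-j+1)/2` for `1 ≤ j ≤ k+1`. The parabola
`x_j = (j-1)(k-j+1)/2` has second difference `-1`, so it solves this reduced system, and a
maximum principle for `x_j (x_{j-1} - 2 x_j + x_{j+1}) = -c_j` with `c > 0` shows that the
reduced system has at most one positive solution.
-/

/-- The `i`-th equation of the algebraic system:
`H_i(x) = −2x_{i−1}² + 4x_i² − 2x_{i+1}² − x_i x_{i+1} + x_{i−2}x_{i−1} − x_{i−1}x_i + x_{i+1}x_{i+2}`. -/
def Hsys (x : ℕ → ℝ) (i : ℕ) : ℝ :=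
  -2 * (x (i - 1)) ^ 2 + 4 * (x i) ^ 2 - 2 * (x (i + 1)) ^ 2 - x i * x (i + 1)
    + x (i - 2) * x (i - 1) - x (i - 1) * x i + x (i + 1) * x (i + 2)

namespace TodaSystem

def secondDiff (u : ℕ → ℝ) (i : ℕ) : ℝ := u (i - 1) - 2 * u i + u (i + 1)

theorem secondDiff_congr {u v : ℕ → ℝ} {i : ℕ} (h : ∀ j, i - 1 ≤ j → j ≤ i + 1 → u j = v j) :
    secondDiff u i = secondDiff v i := by
  simp only [secondDiff, h (i - 1) le_rfl (by omega), h i (by omega) (by omega),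
    h (i + 1) (by omega) le_rfl]

theorem Hsys_eq_secondDiff (x : ℕ → ℝ) {i : ℕ} (hi : 2 ≤ i) :
    Hsys x i = secondDiff (fun j => x j * secondDiff x j) i := by
  obtain ⟨j, rfl⟩ : ∃ j, i = j + 2 := ⟨i - 2, by omega⟩
  simp only [Hsys, secondDiff, show j + 2 - 1 = j + 1 by omega, show j + 2 - 2 = j by omega,
    Nat.add_sub_cancel]
  ring

theorem eq_zero_of_secondDiff_eq_zero {a b : ℕ} {u : ℕ → ℝ}
    (hu : ∀ i, a < i → i < b → secondDiff u i = 0) (ha : u a = 0) (hb : u b = 0)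
    {i : ℕ} (hai : a ≤ i) (hib : i ≤ b) : u i = 0 := by
  have hstep : ∀ m, a + m < b → u (a + m + 1) - u (a + m) = u (a + 1) := by
    intro m
    induction m with
    | zero => simp [ha]
    | succ m ih =>
      intro hm
      have h := hu (a + m + 1) (by omega) (by omega)
      simp only [secondDiff, Nat.add_sub_cancel] at h
      rw [← add_assoc]
      linarith [ih (by omega)]
  have hlin : ∀ m, a + m ≤ b → u (a + m) = m * u (a + 1) := by
    intro m
    induction m with
    | zero => simp [ha]
    | succ m ih =>
      intro hm
      rw [← add_assoc]
      push_cast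
      linarith [ih (by omega), hstep m (by omega)]
  obtain ⟨n, rfl⟩ : ∃ n, b = a + n := ⟨b - a, by omega⟩
  obtain ⟨m, rfl⟩ : ∃ m, i = a + m := ⟨i - a, by omega⟩
  rcases Nat.eq_zero_or_pos n with rfl | hn
  · obtain rfl : m = 0 := by omega
    simpa using ha
  have h1 : u (a + 1) = 0 := by
    have h := hlin n le_rfl
    rw [hb, eq_comm, mul_eq_zero] at h
    exact h.resolve_left (by positivity)
  rw [hlin m hib, h1, mul_zero]

theorem le_of_mul_secondDiff_le {a b : ℕ} {c x y : ℕ → ℝ}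
    (hc : ∀ i, a < i → i < b → 0 < c i)
    (hx : ∀ i, a < i → i < b → 0 ≤ x i) (hy : ∀ i, a < i → i < b → 0 ≤ y i)
    (hxc : ∀ i, a < i → i < b → -c i ≤ x i * secondDiff x i)
    (hyc : ∀ i, a < i → i < b → y i * secondDiff y i ≤ -c i)
    (ha : x a ≤ y a) (hb : x b ≤ y b) {i : ℕ} (hai : a ≤ i) (hib : i ≤ b) : x i ≤ y i := by
  have hi : i ∈ Finset.Icc a b := Finset.mem_Icc.2 ⟨hai, hib⟩
  obtain ⟨j, hj, hmax⟩ := (Finset.Icc a b).exists_max_image (fun i => x i - y i) ⟨i, hi⟩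
  rw [Finset.mem_Icc] at hj
  suffices x j ≤ y j by linarith [hmax i hi]
  by_contra! hyx
  have haj : a < j := lt_of_le_of_ne hj.1 (by rintro rfl; linarith)
  have hjb : j < b := lt_of_le_of_ne hj.2 (by rintro rfl; linarith)
  have hprev := hmax (j - 1) (Finset.mem_Icc.2 ⟨by omega, by omega⟩)
  have hnext := hmax (j + 1) (Finset.mem_Icc.2 ⟨by omega, by omega⟩)
  have hdiff : secondDiff x j - secondDiff y j ≤ 0 := by
    simp only [secondDiff]
    linarith
  -- At an interior positive maximum of `x - y` its second difference is `≤ 0`, whereas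
  -- `x_j y_j (Δx_j - Δy_j) ≥ c_j (x_j - y_j) > 0`.
  nlinarith [mul_le_mul_of_nonneg_left (hxc j haj hjb) (hy j haj hjb),
    mul_le_mul_of_nonneg_left (hyc j haj hjb) (hx j haj hjb),
    mul_pos (hc j haj hjb) (sub_pos.2 hyx),
    mul_nonpos_of_nonneg_of_nonpos (mul_nonneg (hx j haj hjb) (hy j haj hjb)) hdiff]

theorem eq_of_mul_secondDiff_eq {a b : ℕ} {c x y : ℕ → ℝ}
    (hc : ∀ i, a < i → i < b → 0 < c i)
    (hx : ∀ i, a < i → i < b → 0 ≤ x i) (hy : ∀ i, a < i → i < b → 0 ≤ y i)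
    (hxc : ∀ i, a < i → i < b → x i * secondDiff x i = -c i)
    (hyc : ∀ i, a < i → i < b → y i * secondDiff y i = -c i)
    (ha : x a = y a) (hb : x b = y b) {i : ℕ} (hai : a ≤ i) (hib : i ≤ b) : x i = y i :=
  le_antisymm
    (le_of_mul_secondDiff_le hc hx hy (fun i h₁ h₂ => (hxc i h₁ h₂).ge)
      (fun i h₁ h₂ => (hyc i h₁ h₂).le) ha.le hb.le hai hib)
    (le_of_mul_secondDiff_le hc hy hx (fun i h₁ h₂ => (hyc i h₁ h₂).ge)
      (fun i h₁ h₂ => (hxc i h₁ h₂).le) ha.ge hb.ge hai hib)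

variable (k : ℕ)

noncomputable def parabola (i : ℕ) : ℝ := ((i : ℝ) - 1) * ((k : ℝ) - i + 1) / 2

theorem parabola_one : parabola k 1 = 0 := by simp [parabola]

theorem parabola_succ : parabola k (k + 1) = 0 := by simp [parabola]

theorem parabola_pos {i : ℕ} (h₁ : 1 < i) (h₂ : i < k + 1) : 0 < parabola k i := by
  have h₁' : (1 : ℝ) < i := by exact_mod_cast h₁
  have h₂' : (i : ℝ) < k + 1 := by exact_mod_cast h₂
  unfold parabola
  nlinarith

theorem secondDiff_parabola {i : ℕ} (hi : 1 ≤ i) : secondDiff (parabola k) i = -1 := by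
  obtain ⟨j, rfl⟩ : ∃ j, i = j + 1 := ⟨i - 1, by omega⟩
  simp only [secondDiff, parabola, Nat.add_sub_cancel]
  push_cast
  ring

/-- The parabola is negative at `0` and `k + 2`, where the boundary conventions ask for `0`. -/
noncomputable def solution (i : ℕ) : ℝ := if 1 ≤ i ∧ i ≤ k + 1 then parabola k i else 0

theorem solution_eq {i : ℕ} (h₁ : 1 ≤ i) (h₂ : i ≤ k + 1) : solution k i = parabola k i :=
  if_pos ⟨h₁, h₂⟩

theorem solution_one : solution k 1 = 0 := by
  rw [solution_eq k le_rfl (by omega), parabola_one]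

theorem solution_succ : solution k (k + 1) = 0 := by
  rw [solution_eq k (by omega) le_rfl, parabola_succ]

theorem solution_pos {i : ℕ} (h₁ : 1 < i) (h₂ : i < k + 1) : 0 < solution k i := by
  rw [solution_eq k h₁.le h₂.le]
  exact parabola_pos k h₁ h₂

theorem mul_secondDiff_solution {i : ℕ} (h₁ : 1 ≤ i) (h₂ : i ≤ k + 1) :
    solution k i * secondDiff (solution k) i = -parabola k i := by
  rcases (show i = 1 ∨ i = k + 1 ∨ (1 < i ∧ i < k + 1) by omega) with rfl | rfl | ⟨h₁, h₂⟩
  · simp [solution_one, parabola_one]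
  · simp [solution_succ, parabola_succ]
  · rw [secondDiff_congr (v := parabola k) (fun j _ _ => solution_eq k (by omega) (by omega)),
      secondDiff_parabola k h₁.le, solution_eq k h₁.le h₂.le]
    ring

theorem Hsys_solution {i : ℕ} (h₁ : 2 ≤ i) (h₂ : i ≤ k) : Hsys (solution k) i = 1 := by
  rw [Hsys_eq_secondDiff _ h₁, secondDiff_congr (v := fun j => -parabola k j)
    (fun j _ _ => mul_secondDiff_solution k (by omega) (by omega))]
  have h := secondDiff_parabola k (i := i) (by omega)
  simp only [secondDiff] at h ⊢
  linarith

theorem mul_secondDiff_eq_of_Hsys {x : ℕ → ℝ} (hx₁ : x 1 = 0) (hxk : x (k + 1) = 0)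
    (hH : ∀ i, 2 ≤ i → i ≤ k → Hsys x i = 1) {i : ℕ} (h₁ : 1 ≤ i) (h₂ : i ≤ k + 1) :
    x i * secondDiff x i = -parabola k i := by
  have h := eq_zero_of_secondDiff_eq_zero (a := 1) (b := k + 1)
    (u := fun j => x j * secondDiff x j + parabola k j) ?_
    (by simp [hx₁, parabola_one]) (by simp [hxk, parabola_succ]) h₁ h₂
  · linarith
  intro j hj₁ hj₂
  have hHj := Hsys_eq_secondDiff x hj₁
  rw [hH j hj₁ (by omega)] at hHj
  have hp := secondDiff_parabola k hj₁.le
  simp only [secondDiff] at hHj hp ⊢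
  linarith

end TodaSystem

theorem toda_algebraic_system_general (k : ℕ) :
    ∃ xstar : ℕ → ℝ,
      (∀ i, 2 ≤ i → i ≤ k → xstar i = ((i : ℝ) - 1) * ((k : ℝ) - (i : ℝ) + 1) / 2) ∧
      xstar 0 = 0 ∧ xstar 1 = 0 ∧ xstar (k + 1) = 0 ∧ xstar (k + 2) = 0 ∧
      (∀ i, 2 ≤ i → i ≤ k → 0 < xstar i) ∧
      (∀ i, 2 ≤ i → i ≤ k → Hsys xstar i = 1) ∧
      (∀ x : ℕ → ℝ, x 0 = 0 → x 1 = 0 → x (k + 1) = 0 → x (k + 2) = 0 →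
        (∀ i, 2 ≤ i → i ≤ k → 0 < x i) →
        (∀ i, 2 ≤ i → i ≤ k → Hsys x i = 1) →
        ∀ i, 2 ≤ i → i ≤ k → x i = xstar i) := by
  refine ⟨TodaSystem.solution k, fun i h₁ h₂ => TodaSystem.solution_eq k (by omega) (by omega),
    by simp [TodaSystem.solution], TodaSystem.solution_one k, TodaSystem.solution_succ k,
    by simp [TodaSystem.solution], fun i h₁ h₂ => TodaSystem.solution_pos k h₁ (by omega),
    fun i => TodaSystem.Hsys_solution k, ?_⟩
  intro x _ hx₁ hxk _ hx hH i h₁ h₂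
  exact TodaSystem.eq_of_mul_secondDiff_eq (fun i => TodaSystem.parabola_pos k)
    (fun i h₁ h₂ => (hx i h₁ (by omega)).le)
    (fun i h₁ h₂ => (TodaSystem.solution_pos k h₁ h₂).le)
    (fun i h₁ h₂ => TodaSystem.mul_secondDiff_eq_of_Hsys k hx₁ hxk hH h₁.le h₂.le)
    (fun i h₁ h₂ => TodaSystem.mul_secondDiff_solution k h₁.le h₂.le)
    (hx₁.trans (TodaSystem.solution_one k).symm) (hxk.trans (TodaSystem.solution_succ k).symm)
    (by omega) (by omega)

/-- `x_i = (i−1)(k−i+1)/2` is the unique positive solution of the system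
`H_i(x) = 1`, `i = 2,…,k`, under the conventions `x_0 = x_1 = x_{k+1} = x_{k+2} = 0`. -/
theorem toda_algebraic_system (k : ℕ) (hk : 2 ≤ k) :
    ∃ xstar : ℕ → ℝ,
      (∀ i, 2 ≤ i → i ≤ k → xstar i = ((i : ℝ) - 1) * ((k : ℝ) - (i : ℝ) + 1) / 2) ∧
      xstar 0 = 0 ∧ xstar 1 = 0 ∧ xstar (k + 1) = 0 ∧ xstar (k + 2) = 0 ∧
      (∀ i, 2 ≤ i → i ≤ k → 0 < xstar i) ∧
      (∀ i, 2 ≤ i → i ≤ k → Hsys xstar i = 1) ∧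
      (∀ x : ℕ → ℝ, x 0 = 0 → x 1 = 0 → x (k + 1) = 0 → x (k + 2) = 0 →
        (∀ i, 2 ≤ i → i ≤ k → 0 < x i) →
        (∀ i, 2 ≤ i → i ≤ k → Hsys x i = 1) →
        ∀ i, 2 ≤ i → i ≤ k → x i = xstar i) :=
  toda_algebraic_system_general k
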